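/- Let κ be regular uncountable, S ⊆ κ stationary, and assume ◊_κ(S) holds, witnessed by ⟨D_α : α ∈ S⟩ (each D_α ⊆ α, and for every X ⊆ κ the set {α ∈ S : D_α = X ∩ α} is stationary). Then E_0 is Borel reducible to E_S, where E_0 relates X, Y ⊆ κ iff X Δ Y is bounded in κ, and E_S relates X, Y iff (X Δ Y) ∩ S is non-stationary. The map f(X) = {α ∈ S : D_α and X ∩ α agree on a final segment of α} is such a reduction. -/

import Mathlib

open Set

universe u

namespace GDST

def KS (I : Type u) : Type u := I → I
def CS (I : Type u) : Type u := I → Bool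

def kBasic {I : Type u} [LT I] (ζ : I → I) (β : I) : Set (KS I) :=
  {η : KS I | ∀ α : I, α < β → η α = ζ α}

def cBasic {I : Type u} [LT I] (ζ : I → Bool) (β : I) : Set (CS I) :=
  {η : CS I | ∀ α : I, α < β → η α = ζ α}

instance kTop {I : Type u} [LT I] : TopologicalSpace (KS I) :=
  TopologicalSpace.generateFrom {U | ∃ ζ β, U = kBasic ζ β}

instance cTop {I : Type u} [LT I] : TopologicalSpace (CS I) :=
  TopologicalSpace.generateFrom {U | ∃ ζ β, U = cBasic ζ β}
/-- κ-Borel subsets of `2^κ`: smallest family containing the basic open sets and closed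
under complements and intersections of size `≤ κ` (indexed by `I`, of cardinality `κ`). -/
inductive IsCBorel {I : Type u} [LT I] : Set (CS I) → Prop
  | basic (ζ : I → Bool) (β : I) : IsCBorel (cBasic ζ β)
  | compl {s : Set (CS I)} : IsCBorel s → IsCBorel sᶜ
  | iInter {s : I → Set (CS I)} : (∀ i, IsCBorel (s i)) → IsCBorel (⋂ i, s i)
/-- `C` is closed in `o`: every nonzero accumulation point of `C` below `o` lies in `C`. -/
def ClosedIn (C : Set Ordinal) (o : Ordinal) : Prop :=
  ∀ a : Ordinal, a < o → a ≠ 0 → (∀ b : Ordinal, b < a → ∃ c ∈ C, b < c ∧ c < a) → a ∈ C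

/-- `C` is unbounded in `o`. -/
def UnbIn (C : Set Ordinal) (o : Ordinal) : Prop :=
  ∀ a : Ordinal, a < o → ∃ b ∈ C, a < b ∧ b < o

/-- `C` is closed and unbounded (club) in `o`. -/
def ClubIn (C : Set Ordinal) (o : Ordinal) : Prop := ClosedIn C o ∧ UnbIn C o

/-- `S` is stationary in `o`: it meets every club subset of `o`. -/
def StatIn (S : Set Ordinal) (o : Ordinal) : Prop := ∀ C, ClubIn C o → (S ∩ C).Nonempty

/-- The ordinals `< κ`, our copy of the cardinal `κ` as an ordered set. -/
abbrev Sub (κ : Cardinal) : Type 1 := {o : Ordinal // o < κ.ord}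

/-- The subset of `κ` coded by `η ∈ 2^κ`. -/
def toSet (κ : Cardinal) (η : CS (Sub κ)) : Set Ordinal :=
  {o : Ordinal | ∃ h : o < κ.ord, η ⟨o, h⟩ = true}

/-! If `X Δ Y` is bounded by `β`, then for every `α > β` the guess `D α` agrees with `X` on a
final segment of `α` iff it does so with `Y`; hence `f X Δ f Y` is bounded and so non-stationary.
If `X Δ Y` is unbounded, its limit points form a club, and `◊_κ(S)` puts stationarily many `α` of
that club in `S` with `D α = X ∩ α`: each such `α` lies in `f X` but not in `f Y`, because `X`
and `Y` differ cofinally below `α`.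

Bit `α` of `f X` depends only on `X ∩ α`, so `f` is continuous. Every bounded subset of `κ` is
some `D α`, so there are only `κ` basic open sets, and an open set, being a union of basic
ones, is `κ`-Borel. -/

def cBasicSets (I : Type u) [LT I] : Set (Set (CS I)) := {V | ∃ ζ β, V = cBasic ζ β}

section Topology

variable {I : Type u}

lemma isOpen_cBasic [LT I] (ζ : CS I) (β : I) : IsOpen (cBasic ζ β) :=
  TopologicalSpace.isOpen_generateFrom_of_mem ⟨ζ, β, rfl⟩

lemma cBasic_subset_cBasic [Preorder I] {ζ η : CS I} {β β' : I} (hη : η ∈ cBasic ζ β)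
    (hβ : β ≤ β') : cBasic η β' ⊆ cBasic ζ β :=
  fun _ h α hα => (h α (hα.trans_le hβ)).trans (hη α hα)

lemma exists_cBasic_subset_of_isOpen [LinearOrder I] [Nonempty I] {U : Set (CS I)}
    (hU : IsOpen U) {η : CS I} (hη : η ∈ U) : ∃ β, cBasic η β ⊆ U := by
  induction hU generalizing η with
  | basic V hV =>
    obtain ⟨ζ, β, rfl⟩ := hV
    exact ⟨β, cBasic_subset_cBasic hη le_rfl⟩
  | univ => exact ⟨Classical.arbitrary I, subset_univ _⟩
  | inter s t _ _ ihs iht =>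
    obtain ⟨β₁, h₁⟩ := ihs hη.1
    obtain ⟨β₂, h₂⟩ := iht hη.2
    exact ⟨max β₁ β₂, fun η' h => ⟨h₁ (cBasic_subset_cBasic (fun _ _ => rfl) (le_max_left _ _) h),
      h₂ (cBasic_subset_cBasic (fun _ _ => rfl) (le_max_right _ _) h)⟩⟩
  | sUnion 𝒮 _ ih =>
    obtain ⟨V, hV, hηV⟩ := hη
    obtain ⟨β, hβ⟩ := ih V hV hηV
    exact ⟨β, hβ.trans (subset_sUnion_of_mem hV)⟩

lemma continuous_of_apply_determined_below [LinearOrder I] [Nonempty I] {f : CS I → CS I}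
    (hf : ∀ η η' α, (∀ γ < α, η γ = η' γ) → f η α = f η' α) : Continuous f := by
  refine continuous_def.mpr fun U hU => isOpen_iff_forall_mem_open.mpr fun η hη => ?_
  obtain ⟨β, hβ⟩ := exists_cBasic_subset_of_isOpen hU hη
  refine ⟨cBasic η β, fun η' h' => hβ fun α hα => ?_, isOpen_cBasic η β, fun _ _ => rfl⟩
  exact hf η' η α fun γ hγ => h' γ (hγ.trans hα)

end Topology

section Borel

variable {I : Type u} [LinearOrder I]

lemma IsCBorel.empty [Nontrivial I] : IsCBorel (∅ : Set (CS I)) := by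
  obtain ⟨α, β, hαβ⟩ := exists_pair_lt I
  let ζ : CS I := fun _ => true
  convert IsCBorel.iInter (s := fun i => if i = β then cBasic ζ β else cBasic (! ζ ·) β)
    fun i => by split <;> exact .basic _ _
  refine (eq_empty_of_forall_notMem fun η hη => ?_).symm
  have h₁ := mem_iInter.mp hη β
  have h₂ := mem_iInter.mp hη α
  simp only [if_neg hαβ.ne] at h₁ h₂
  simpa [ζ, h₁ α hαβ] using h₂ α hαβ

lemma IsCBorel.iUnion {s : I → Set (CS I)} (h : ∀ i, IsCBorel (s i)) : IsCBorel (⋃ i, s i) := by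
  simpa using (IsCBorel.iInter fun i => (h i).compl).compl

lemma IsCBorel.sUnion [Nontrivial I] {𝒮 : Set (Set (CS I))} (h : ∀ s ∈ 𝒮, IsCBorel s)
    (h𝒮 : Cardinal.mk 𝒮 ≤ Cardinal.mk I) : IsCBorel (⋃₀ 𝒮) := by
  rcases 𝒮.eq_empty_or_nonempty with rfl | hne
  · simpa using IsCBorel.empty
  obtain ⟨e⟩ := Cardinal.le_def _ _ |>.mp h𝒮
  have : Nonempty 𝒮 := hne.to_subtype
  rw [sUnion_eq_iUnion, ← (Function.invFun_surjective e.injective).iUnion_comp]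
  exact .iUnion fun i => h _ (Function.invFun e i).2

lemma IsCBorel.of_isOpen [Nontrivial I] (hI : Cardinal.mk (cBasicSets I) ≤ Cardinal.mk I)
    {U : Set (CS I)} (hU : IsOpen U) : IsCBorel U := by
  have hU' : U = ⋃₀ {V ∈ cBasicSets I | V ⊆ U} := by
    refine (sUnion_subset fun V hV => hV.2).antisymm' fun η hη => ?_
    obtain ⟨β, hβ⟩ := exists_cBasic_subset_of_isOpen hU hη
    exact ⟨cBasic η β, ⟨⟨η, β, rfl⟩, hβ⟩, fun _ _ => rfl⟩
  rw [hU']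
  refine .sUnion ?_ ((Cardinal.mk_le_mk_of_subset (sep_subset _ _)).trans hI)
  rintro _ ⟨⟨ζ, β, rfl⟩, -⟩
  exact .basic ζ β

end Borel

section Clubs

variable {o : Ordinal}

lemma clubIn_Ioo (ho : Order.IsSuccLimit o) {β : Ordinal} (hβ : β < o) : ClubIn (Ioo β o) o := by
  refine ⟨fun a ha ha0 hacc => ?_, fun a ha => ?_⟩
  · obtain ⟨c, hc, -, hca⟩ := hacc 0 (pos_iff_ne_zero.mpr ha0)
    exact ⟨hc.1.trans hca, ha⟩
  · have hlt : Order.succ (max a β) < o := ho.succ_lt (max_lt ha hβ)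
    have hlt_succ := Order.lt_succ (max a β)
    exact ⟨_, ⟨(le_max_right a β).trans_lt hlt_succ, hlt⟩, (le_max_left a β).trans_lt hlt_succ,
      hlt⟩

/-- `l` is the supremum of `ω` steps starting at `a`; it stays below `o` because `cof o > ω`. -/
lemma exists_lt_forall_exists_step (hcof : Cardinal.aleph0 < o.cof)
    (P : Ordinal → Ordinal → Prop) (hstep : ∀ x < o, ∃ y < o, x < y ∧ P x y)
    {a : Ordinal} (ha : a < o) :
    ∃ l < o, a < l ∧ ∀ b < l, ∃ x y, b < x ∧ x < y ∧ y < l ∧ P x y := by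
  choose! next hnext_lt hlt_next hP using hstep
  let g : ℕ → Ordinal := fun n => next^[n] a
  have hg_succ : ∀ n, g (n + 1) = next (g n) := fun n => Function.iterate_succ_apply' _ _ _
  have hg_lt : ∀ n, g n < o := fun n => by
    induction n with
    | zero => exact ha
    | succ n ih => rw [hg_succ]; exact hnext_lt _ ih
  have hg_lt_sup : ∀ n, g n < ⨆ n, g n := fun n =>
    (hg_succ n ▸ hlt_next _ (hg_lt n)).trans_le (Ordinal.le_iSup g (n + 1))
  refine ⟨⨆ n, g n, Ordinal.lift_iSup_lt_of_lt_cof (by simpa using hcof) hg_lt, hg_lt_sup 0,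
    fun b hb => ?_⟩
  obtain ⟨n, hn⟩ := Ordinal.lt_iSup_iff.mp hb
  exact ⟨g n, g (n + 1), hn, hg_succ n ▸ hlt_next _ (hg_lt n), hg_lt_sup (n + 1),
    hg_succ n ▸ hP _ (hg_lt n)⟩

lemma ClubIn.inter (hcof : Cardinal.aleph0 < o.cof) {C C' : Set Ordinal} (hC : ClubIn C o)
    (hC' : ClubIn C' o) : ClubIn (C ∩ C') o := by
  refine ⟨fun a ha ha0 hacc => ⟨hC.1 a ha ha0 fun b hb => ?_, hC'.1 a ha ha0 fun b hb => ?_⟩,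
    fun a ha => ?_⟩
  · obtain ⟨c, hc, hbc, hca⟩ := hacc b hb
    exact ⟨c, hc.1, hbc, hca⟩
  · obtain ⟨c, hc, hbc, hca⟩ := hacc b hb
    exact ⟨c, hc.2, hbc, hca⟩
  have hstep : ∀ x < o, ∃ y < o, x < y ∧ (∃ c ∈ C, x < c ∧ c < y) ∧ y ∈ C' := by
    intro x hx
    obtain ⟨c, hcC, hxc, hco⟩ := hC.2 x hx
    obtain ⟨y, hyC', hcy, hyo⟩ := hC'.2 c hco
    exact ⟨y, hyo, hxc.trans hcy, ⟨c, hcC, hxc, hcy⟩, hyC'⟩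
  obtain ⟨l, hlo, hal, hl⟩ := exists_lt_forall_exists_step hcof _ hstep ha
  have hl0 : l ≠ 0 := (pos_of_gt hal).ne'
  refine ⟨l, ⟨hC.1 l hlo hl0 fun b hb => ?_, hC'.1 l hlo hl0 fun b hb => ?_⟩, hal, hlo⟩
  · obtain ⟨x, y, hbx, -, hyl, ⟨c, hcC, hxc, hcy⟩, -⟩ := hl b hb
    exact ⟨c, hcC, hbx.trans hxc, hcy.trans hyl⟩
  · obtain ⟨x, y, hbx, hxy, hyl, -, hyC'⟩ := hl b hb
    exact ⟨y, hyC', hbx.trans hxy, hyl⟩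

def accBelow (E : Set Ordinal) (o : Ordinal) : Set Ordinal :=
  {a | 0 < a ∧ a < o ∧ ∀ b < a, ∃ c ∈ E, b < c ∧ c < a}

lemma clubIn_accBelow (hcof : Cardinal.aleph0 < o.cof) {E : Set Ordinal} (hE : UnbIn E o) :
    ClubIn (accBelow E o) o := by
  refine ⟨fun a ha ha0 hacc => ⟨pos_iff_ne_zero.mpr ha0, ha, fun b hb => ?_⟩, fun a ha => ?_⟩
  · obtain ⟨c', hc', hbc', hc'a⟩ := hacc b hb
    obtain ⟨c, hcE, hbc, hcc'⟩ := hc'.2.2 b hbc'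
    exact ⟨c, hcE, hbc, hcc'.trans hc'a⟩
  have hstep : ∀ x < o, ∃ y < o, x < y ∧ y ∈ E := fun x hx => by
    obtain ⟨y, hyE, hxy, hyo⟩ := hE x hx
    exact ⟨y, hyo, hxy, hyE⟩
  obtain ⟨l, hlo, hal, hl⟩ := exists_lt_forall_exists_step hcof _ hstep ha
  refine ⟨l, ⟨pos_of_gt hal, hlo, fun b hb => ?_⟩, hal, hlo⟩
  obtain ⟨x, y, hbx, hxy, hyl, hyE⟩ := hl b hb
  exact ⟨y, hyE, hbx.trans hxy, hyl⟩

lemma StatIn.mono {T T' : Set Ordinal} (hT : StatIn T o) (h : T ⊆ T') : StatIn T' o :=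
  fun C hC => (hT C hC).mono (inter_subset_inter_left C h)

lemma StatIn.inter_clubIn (hcof : Cardinal.aleph0 < o.cof) {T C : Set Ordinal}
    (hT : StatIn T o) (hC : ClubIn C o) : StatIn (T ∩ C) o := fun C' hC' => by
  simpa [inter_assoc] using hT _ (hC.inter hcof hC')

lemma not_statIn_of_subset_Iic (ho : Order.IsSuccLimit o) {T : Set Ordinal} {β : Ordinal}
    (hβ : β < o) (hT : T ⊆ Iic β) : ¬ StatIn T o := fun hstat => by
  obtain ⟨γ, hγT, hβγ, -⟩ := hstat _ (clubIn_Ioo ho hβ)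
  exact (hT hγT).not_gt hβγ

lemma unbIn_of_not_bounded (ho : Order.IsSuccLimit o) {E : Set Ordinal} (hE : E ⊆ Iio o)
    (h : ¬ ∃ β < o, ∀ γ ∈ E, γ < β) : UnbIn E o := fun b hb => by
  push Not at h
  obtain ⟨c, hcE, hbc⟩ := h _ (ho.succ_lt hb)
  exact ⟨c, hcE, Order.lt_succ_iff_not_isMax.mpr (not_isMax b) |>.trans_le hbc, hE hcE⟩

lemma exists_eq_of_diamond (ho : Order.IsSuccLimit o) {S : Set Ordinal}
    {D : Ordinal → Set Ordinal}
    (hD : ∀ X : Set Ordinal, X ⊆ Iio o → StatIn {α | α ∈ S ∧ D α = X ∩ Iio α} o)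
    {β : Ordinal} (hβ : β < o) {X : Set Ordinal} (hX : X ⊆ Iio β) : ∃ α < o, D α = X := by
  obtain ⟨α, ⟨-, hDα⟩, hβα, hαo⟩ :=
    hD X (hX.trans (Iio_subset_Iio hβ.le)) _ (clubIn_Ioo ho hβ)
  exact ⟨α, hαo, hDα.trans (inter_eq_left.mpr (hX.trans (Iio_subset_Iio hβα.le)))⟩

end Clubs

section TailReduction

def AgreeOnTail (X Y : Set Ordinal) (α : Ordinal) : Prop :=
  ∃ β < α, ∀ γ : Ordinal, β ≤ γ → γ < α → (γ ∈ X ↔ γ ∈ Y)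

variable {X Y Z : Set Ordinal} {α : Ordinal}

lemma AgreeOnTail.symm (h : AgreeOnTail X Y α) : AgreeOnTail Y X α :=
  let ⟨β, hβ, hXY⟩ := h
  ⟨β, hβ, fun γ h₁ h₂ => (hXY γ h₁ h₂).symm⟩

lemma AgreeOnTail.trans (h : AgreeOnTail X Y α) (h' : AgreeOnTail Y Z α) :
    AgreeOnTail X Z α :=
  let ⟨β, hβ, hXY⟩ := h
  let ⟨β', hβ', hYZ⟩ := h'
  ⟨max β β', max_lt hβ hβ', fun γ h₁ h₂ =>
    (hXY γ (le_of_max_le_left h₁) h₂).trans (hYZ γ (le_of_max_le_right h₁) h₂)⟩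

lemma agreeOnTail_congr_right (h : Y ∩ Iio α = Z ∩ Iio α) :
    AgreeOnTail X Y α ↔ AgreeOnTail X Z α := by
  have hmem : ∀ γ < α, (γ ∈ Y ↔ γ ∈ Z) := fun γ hγ => by
    simpa [hγ] using congrArg (γ ∈ ·) h
  unfold AgreeOnTail
  exact exists_congr fun _ => and_congr_right fun _ => forall₂_congr fun γ _ =>
    forall_congr' fun hγ => iff_congr Iff.rfl (hmem γ hγ)

lemma agreeOnTail_of_symmDiff_lt {β : Ordinal} (hβ : β < α)
    (h : ∀ γ ∈ symmDiff X Y, γ < β) : AgreeOnTail X Y α :=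
  ⟨β, hβ, fun γ hβγ _ => by
    by_contra hne
    exact (h γ (mem_symmDiff.mpr (by tauto))).not_ge hβγ⟩

lemma agreeOnTail_of_eq_inter_Iio (hα : 0 < α) (h : X = Y ∩ Iio α) : AgreeOnTail X Y α :=
  ⟨0, hα, fun γ _ hγ => by simp [h, hγ]⟩

lemma not_agreeOnTail_of_forall_exists_symmDiff
    (h : ∀ β < α, ∃ γ ∈ symmDiff X Y, β < γ ∧ γ < α) : ¬ AgreeOnTail X Y α := by
  rintro ⟨β, hβ, hXY⟩
  obtain ⟨γ, hγ, hβγ, hγα⟩ := h β hβ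
  have := hXY γ hβγ.le hγα
  rw [mem_symmDiff] at hγ
  tauto

def tailSet (S : Set Ordinal) (D : Ordinal → Set Ordinal) (X : Set Ordinal) : Set Ordinal :=
  {α | α ∈ S ∧ AgreeOnTail (D α) X α}

variable {S : Set Ordinal} {D : Ordinal → Set Ordinal}

lemma mem_tailSet_congr (h : X ∩ Iio α = Y ∩ Iio α) :
    α ∈ tailSet S D X ↔ α ∈ tailSet S D Y :=
  and_congr_right fun _ => agreeOnTail_congr_right h

lemma symmDiff_tailSet_subset_Iic {β : Ordinal} (h : ∀ γ ∈ symmDiff X Y, γ < β) :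
    symmDiff (tailSet S D X) (tailSet S D Y) ⊆ Iic β := by
  intro α hα
  by_contra hβα
  have hXY := agreeOnTail_of_symmDiff_lt (not_le.mp hβα) h
  rw [mem_symmDiff] at hα
  rcases hα with ⟨⟨hS, hX⟩, hY⟩ | ⟨⟨hS, hY⟩, hX⟩
  · exact hY ⟨hS, hX.trans hXY⟩
  · exact hX ⟨hS, hY.trans hXY.symm⟩

lemma mem_tailSet_diff_of_mem_accBelow {o : Ordinal} (hS : α ∈ S) (hD : D α = X ∩ Iio α)
    (hacc : α ∈ accBelow (symmDiff X Y) o) : α ∈ tailSet S D X \ tailSet S D Y := by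
  have hX : AgreeOnTail (D α) X α := agreeOnTail_of_eq_inter_Iio hacc.1 hD
  exact ⟨⟨hS, hX⟩, fun hY =>
    not_agreeOnTail_of_forall_exists_symmDiff hacc.2.2 (hX.symm.trans hY.2)⟩

end TailReduction

section Reduction

variable {κ : Cardinal}

lemma infinite_sub (hκ : Cardinal.aleph0 ≤ κ) : Infinite (Sub κ) := by
  refine Cardinal.infinite_iff.mpr ?_
  simpa [Sub, ← Set.mem_Iio, Cardinal.mk_Iio_ordinal] using hκ

lemma toSet_subset_Iio (η : CS (Sub κ)) : toSet κ η ⊆ Iio κ.ord := fun _ ⟨h, _⟩ => h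

lemma toSet_inter_Iio_eq {η η' : CS (Sub κ)} {α : Sub κ} (h : ∀ γ < α, η γ = η' γ) :
    toSet κ η ∩ Iio α.1 = toSet κ η' ∩ Iio α.1 := by
  ext γ
  constructor <;> rintro ⟨⟨hγκ, hη⟩, hγα⟩ <;> refine ⟨⟨hγκ, ?_⟩, hγα⟩
  · rwa [← h ⟨γ, hγκ⟩ hγα]
  · rwa [h ⟨γ, hγκ⟩ hγα]

open Classical in
lemma mk_cBasicSets_le (hκ : Cardinal.aleph0 ≤ κ) {D : Ordinal → Set Ordinal}
    (hD : ∀ β : Sub κ, ∀ X ⊆ Iio β.1, ∃ α : Sub κ, D α.1 = X) :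
    Cardinal.mk (cBasicSets (Sub κ)) ≤ Cardinal.mk (Sub κ) := by
  -- `cBasic ζ β` only depends on `ζ` below `β`, and `D` enumerates the bounded subsets of `κ`.
  let code : Sub κ × Sub κ → Set (CS (Sub κ)) :=
    fun p => cBasic (fun γ => decide (γ.1 ∈ D p.2.1)) p.1
  have hsub : cBasicSets (Sub κ) ⊆ range code := by
    rintro _ ⟨ζ, β, rfl⟩
    obtain ⟨α, hα⟩ := hD β {γ | ∃ h : γ < β.1, ζ ⟨γ, h.trans β.2⟩ = true} fun _ ⟨h, _⟩ => h
    refine ⟨(β, α), ?_⟩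
    ext η
    refine forall₂_congr fun γ hγ => ?_
    simp [hα, show γ.1 < β.1 from hγ]
  have := infinite_sub hκ
  calc Cardinal.mk (cBasicSets (Sub κ))
      ≤ Cardinal.mk (Sub κ × Sub κ) := (Cardinal.mk_le_mk_of_subset hsub).trans Cardinal.mk_range_le
    _ = Cardinal.mk (Sub κ) := by
      rw [Cardinal.mk_prod, Cardinal.lift_id, Cardinal.mul_eq_self (Cardinal.infinite_iff.mp this)]

open Classical in
noncomputable def tailReduction (κ : Cardinal) (S : Set Ordinal) (D : Ordinal → Set Ordinal)
    (η : CS (Sub κ)) : CS (Sub κ) :=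
  fun α => decide (α.1 ∈ tailSet S D (toSet κ η))

variable {S : Set Ordinal} {D : Ordinal → Set Ordinal}

open Classical in
lemma tailReduction_eq_true_iff {η : CS (Sub κ)} {α : Sub κ} :
    tailReduction κ S D η α = true ↔ α.1 ∈ tailSet S D (toSet κ η) :=
  decide_eq_true_iff

lemma toSet_tailReduction (η : CS (Sub κ)) :
    toSet κ (tailReduction κ S D η) = tailSet S D (toSet κ η) ∩ Iio κ.ord := by
  ext α
  exact ⟨fun ⟨h, hα⟩ => ⟨tailReduction_eq_true_iff.mp hα, h⟩,
    fun ⟨hα, h⟩ => ⟨h, tailReduction_eq_true_iff.mpr hα⟩⟩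

lemma continuous_tailReduction [Nonempty (Sub κ)] : Continuous (tailReduction κ S D) :=
  continuous_of_apply_determined_below fun _ _ _ h => Bool.eq_iff_iff.mpr <| by
    simp only [tailReduction_eq_true_iff]
    exact mem_tailSet_congr (toSet_inter_Iio_eq h)

end Reduction

theorem stmt16_general (κ : Cardinal) (hreg : κ.IsRegular) (hunc : Cardinal.aleph0 < κ)
    (S : Set Ordinal)
    (D : Ordinal → Set Ordinal)
    (hD2 : ∀ X : Set Ordinal, X ⊆ Set.Iio κ.ord →
      StatIn {α | α ∈ S ∧ D α = X ∩ Set.Iio α} κ.ord) :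
    ∃ f : CS (Sub κ) → CS (Sub κ),
      (∀ U : Set (CS (Sub κ)), IsOpen U → IsCBorel (f ⁻¹' U)) ∧
      (∀ (η : CS (Sub κ)) (α : Sub κ),
        f η α = true ↔ (α.1 ∈ S ∧ ∃ β < α.1, ∀ γ : Ordinal, β ≤ γ → γ < α.1 →
          (γ ∈ D α.1 ↔ γ ∈ toSet κ η))) ∧
      (∀ A B : CS (Sub κ),
        (∃ β < κ.ord, ∀ o ∈ symmDiff (toSet κ A) (toSet κ B), o < β) ↔
        (¬ StatIn (symmDiff (toSet κ (f A)) (toSet κ (f B)) ∩ S) κ.ord)) := by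
  have hlim : Order.IsSuccLimit κ.ord := Cardinal.isSuccLimit_ord hunc.le
  have hcof : Cardinal.aleph0 < κ.ord.cof := hreg.cof_ord.symm ▸ hunc
  have := infinite_sub hunc.le
  refine ⟨tailReduction κ S D, fun U hU => ?_, fun _ _ => tailReduction_eq_true_iff,
    fun A B => ?_⟩
  · refine .of_isOpen (mk_cBasicSets_le (D := D) hunc.le fun β X hX => ?_)
      (continuous_tailReduction.isOpen_preimage U hU)
    obtain ⟨α, hα, hDα⟩ := exists_eq_of_diamond hlim hD2 β.2 hX
    exact ⟨⟨α, hα⟩, hDα⟩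
  rw [toSet_tailReduction, toSet_tailReduction, ← inter_symmDiff_distrib_right]
  refine ⟨fun ⟨β, hβ, hbd⟩ => not_statIn_of_subset_Iic hlim hβ fun γ hγ =>
    symmDiff_tailSet_subset_Iic hbd hγ.1.1, fun hns => by_contra fun hunb => hns ?_⟩
  have hE := unbIn_of_not_bounded hlim
    (symmDiff_le_sup.trans (union_subset (toSet_subset_Iio A) (toSet_subset_Iio B))) hunb
  refine ((hD2 _ (toSet_subset_Iio A)).inter_clubIn hcof (clubIn_accBelow hcof hE)).mono ?_
  rintro α ⟨⟨hS, hDα⟩, hacc⟩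
  exact ⟨⟨Or.inl (mem_tailSet_diff_of_mem_accBelow hS hDα hacc), hacc.2.1⟩, hS⟩

/-- assume `◊_κ(S)` on the stationary set `S ⊆ κ`, witnessed by
`⟨D α : α ∈ S⟩`.  Then `E₀` (equivalence modulo bounded sets) is Borel reducible to `E_S`
(equivalence modulo non-stationarity on `S`), and the map
`f(X) = {α ∈ S : D α and X ∩ α agree on a final segment of α}` is such a reduction. -/
theorem stmt16 (κ : Cardinal) (hreg : κ.IsRegular) (hunc : Cardinal.aleph0 < κ)
    (S : Set Ordinal) (hSsub : S ⊆ Set.Iio κ.ord) (hS : StatIn S κ.ord)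
    (D : Ordinal → Set Ordinal) (hD1 : ∀ α ∈ S, D α ⊆ Set.Iio α)
    (hD2 : ∀ X : Set Ordinal, X ⊆ Set.Iio κ.ord →
      StatIn {α | α ∈ S ∧ D α = X ∩ Set.Iio α} κ.ord) :
    ∃ f : CS (Sub κ) → CS (Sub κ),
      (∀ U : Set (CS (Sub κ)), IsOpen U → IsCBorel (f ⁻¹' U)) ∧
      (∀ (η : CS (Sub κ)) (α : Sub κ),
        f η α = true ↔ (α.1 ∈ S ∧ ∃ β < α.1, ∀ γ : Ordinal, β ≤ γ → γ < α.1 →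
          (γ ∈ D α.1 ↔ γ ∈ toSet κ η))) ∧
      (∀ A B : CS (Sub κ),
        (∃ β < κ.ord, ∀ o ∈ symmDiff (toSet κ A) (toSet κ B), o < β) ↔
        (¬ StatIn (symmDiff (toSet κ (f A)) (toSet κ (f B)) ∩ S) κ.ord)) :=
  stmt16_general κ hreg hunc S D hD2

end GDST
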